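/- Let e_1, ..., e_k be pairwise disjoint open segments in the plane (no two intersect), each with endpoints having distinct x-coordinates. Define e ≻ f if there is a vertical line meeting the relative interiors of both e and f with the intersection point on e having strictly larger y-coordinate than that on f. Then ≻ is asymmetric: e ≻ f implies ¬(f ≻ e). -/
import Mathlib

/-- The relation "`e` lies above `f` on some common vertical line". -/
def segAbove (P Q : (ℝ × ℝ) × (ℝ × ℝ)) : Prop :=
  ∃ z₁ ∈ openSegment ℝ P.1 P.2, ∃ z₂ ∈ openSegment ℝ Q.1 Q.2,
    z₁.1 = z₂.1 ∧ z₂.2 < z₁.2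

/-- The affine function whose graph over the x-interval is the segment `[P, Q]`. -/
noncomputable def segAff (P Q : ℝ × ℝ) (x : ℝ) : ℝ :=
  P.2 + (x - P.1) * (Q.2 - P.2) / (Q.1 - P.1)

lemma segAff_continuous (P Q : ℝ × ℝ) : Continuous (segAff P Q) := by
  unfold segAff; continuity

lemma mem_openSegment_iff_graph (P Q : ℝ × ℝ) (h : P.1 ≠ Q.1) (z : ℝ × ℝ) :
    z ∈ openSegment ℝ P Q ↔
      z.1 ∈ openSegment ℝ P.1 Q.1 ∧ z.2 = segAff P Q z.1 := by
  have hd : Q.1 - P.1 ≠ 0 := sub_ne_zero.mpr (Ne.symm h)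
  rw [openSegment_eq_image, openSegment_eq_image]
  constructor
  · rintro ⟨t, ht, rfl⟩
    refine ⟨⟨t, ht, rfl⟩, ?_⟩
    simp only [segAff, Prod.smul_fst, Prod.smul_snd, Prod.fst_add, Prod.snd_add,
      smul_eq_mul]
    field_simp
    ring
  · rintro ⟨⟨t, ht, h1⟩, h2⟩
    refine ⟨t, ht, ?_⟩
    have : segAff P Q z.1 = (1 - t) * P.2 + t * Q.2 := by
      rw [← h1]; simp only [segAff, smul_eq_mul]; field_simp; ring
    apply Prod.ext
    · simpa using h1.symm ▸ rfl
    · simp only [Prod.smul_snd, Prod.snd_add, smul_eq_mul]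
      rw [h2, this]

/-- For pairwise disjoint open segments whose endpoints have distinct
x-coordinates, the "above" relation is asymmetric. -/
theorem stmt_17 (k : ℕ) (e : Fin k → (ℝ × ℝ) × (ℝ × ℝ))
    (hx : ∀ i, ((e i).1).1 ≠ ((e i).2).1)
    (hdisj : ∀ i j, i ≠ j →
      Disjoint (openSegment ℝ (e i).1 (e i).2) (openSegment ℝ (e j).1 (e j).2)) :
    ∀ i j, segAbove (e i) (e j) → ¬ segAbove (e j) (e i) := by
  intro i j hij hji
  obtain ⟨z₁, hz₁, z₂, hz₂, hxe, hy⟩ := hij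
  obtain ⟨w₁, hw₁, w₂, hw₂, hxe', hy'⟩ := hji
  rw [mem_openSegment_iff_graph _ _ (hx i)] at hz₁ hw₂
  rw [mem_openSegment_iff_graph _ _ (hx j)] at hz₂ hw₁
  have hga : segAff (e j).1 (e j).2 z₁.1 < segAff (e i).1 (e i).2 z₁.1 := by
    rw [← hz₁.2, hxe, ← hz₂.2]; exact hy
  have hgb : segAff (e i).1 (e i).2 w₁.1 < segAff (e j).1 (e j).2 w₁.1 := by
    rw [← hw₁.2, hxe', ← hw₂.2]; exact hy'
  have hne : i ≠ j := by rintro rfl; exact lt_irrefl _ hga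
  have hcont : ContinuousOn
      (fun x => segAff (e i).1 (e i).2 x - segAff (e j).1 (e j).2 x)
      (Set.uIcc z₁.1 w₁.1) :=
    ((segAff_continuous _ _).sub (segAff_continuous _ _)).continuousOn
  have h0 : (0 : ℝ) ∈ (fun x => segAff (e i).1 (e i).2 x - segAff (e j).1 (e j).2 x) ''
      Set.uIcc z₁.1 w₁.1 := by
    apply intermediate_value_uIcc hcont
    rw [Set.mem_uIcc]
    right
    constructor <;> linarith
  obtain ⟨x0, hx0, hx0eq⟩ := h0
  have heq : segAff (e i).1 (e i).2 x0 = segAff (e j).1 (e j).2 x0 := by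
    have := hx0eq; simp only [sub_eq_zero] at this; exact this
  have hai : z₁.1 ∈ openSegment ℝ ((e i).1).1 ((e i).2).1 := hz₁.1
  have hbi : w₁.1 ∈ openSegment ℝ ((e i).1).1 ((e i).2).1 := by
    rw [hxe']; exact hw₂.1
  have haj : z₁.1 ∈ openSegment ℝ ((e j).1).1 ((e j).2).1 := by
    rw [hxe]; exact hz₂.1
  have hbj : w₁.1 ∈ openSegment ℝ ((e j).1).1 ((e j).2).1 := hw₁.1
  have hx0i : x0 ∈ openSegment ℝ ((e i).1).1 ((e i).2).1 :=
    (convex_openSegment _ _).ordConnected.uIcc_subset hai hbi hx0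
  have hx0j : x0 ∈ openSegment ℝ ((e j).1).1 ((e j).2).1 :=
    (convex_openSegment _ _).ordConnected.uIcc_subset haj hbj hx0
  have hpi : (x0, segAff (e i).1 (e i).2 x0) ∈ openSegment ℝ (e i).1 (e i).2 := by
    rw [mem_openSegment_iff_graph _ _ (hx i)]; exact ⟨hx0i, rfl⟩
  have hpj : (x0, segAff (e i).1 (e i).2 x0) ∈ openSegment ℝ (e j).1 (e j).2 := by
    rw [mem_openSegment_iff_graph _ _ (hx j)]; exact ⟨hx0j, heq⟩
  exact (hdisj i j hne).ne_of_mem hpi hpj rfl
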